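/- Let H > 0 and R₀ > 0. Suppose l : [0, R₀] → ℝ is twice continuously differentiable with l(0) = 0, l'(0) = 2π, and l''(r) ≥ −H² l(r) for all r ∈ [0, R₀]. Suppose moreover that for every R ∈ (0, R₀] and every twice continuously differentiable η : [0,R] → ℝ with η(0) = 1 and η(R) = 0 one has ∫₀^R η'(r)² l(r) dr − 4H² ∫₀^R η(r)² l(r) dr − 2 ∫₀^R l''(r) η(r)² dr ≥ 0. Then R₀ ≤ π/(2H). -/

import Mathlib

/-!
Integrating `∫ l'' η²` by parts twice turns the stability inequality into
`∫₀ᴿ Q_η l ≤ 2 l'(0) = 4π` with `Q_η = 3 η'² + 4 η η'' + 4 H² η²`. Sturm comparison with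
`sin (H r)` (the Wronskian `l' sin (H r) - H l cos (H r)` is nondecreasing) gives
`l r ≥ (2π / H) sin (H r)` while `H r < π`. If `R₀ > π / (2H)`, pick `R ≤ R₀` with
`π/2 < H R < π` and test with `η = (cos (H r) - c) / (1 - c)`, `c = cos (H R) < 0`.
Then `Q_η ≥ 0`, so `∫ Q_η l ≥ (2π / H) ∫ Q_η sin (H r) = 2π (2 - c) > 4π`, a contradiction.
-/

open Real MeasureTheory intervalIntegral Set Filter Topology

theorem integral_mul_deriv_deriv_eq_deriv_deriv_mul {f f' f'' g g' g'' : ℝ → ℝ} {a b : ℝ}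
    (hf : ∀ x ∈ uIcc a b, HasDerivAt f (f' x) x) (hf' : ∀ x ∈ uIcc a b, HasDerivAt f' (f'' x) x)
    (hg : ∀ x ∈ uIcc a b, HasDerivAt g (g' x) x) (hg' : ∀ x ∈ uIcc a b, HasDerivAt g' (g'' x) x)
    (hf'' : IntervalIntegrable f'' volume a b) (hg'' : IntervalIntegrable g'' volume a b) :
    ∫ x in a..b, g x * f'' x =
      g b * f' b - g' b * f b - (g a * f' a - g' a * f a) + ∫ x in a..b, g'' x * f x := by
  have hf'_int : IntervalIntegrable f' volume a b :=
    ContinuousOn.intervalIntegrable fun x hx => (hf' x hx).continuousAt.continuousWithinAt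
  have hg'_int : IntervalIntegrable g' volume a b :=
    ContinuousOn.intervalIntegrable fun x hx => (hg' x hx).continuousAt.continuousWithinAt
  rw [integral_mul_deriv_eq_deriv_mul hg hf' hg'_int hf'',
    integral_mul_deriv_eq_deriv_mul hg' hf hg'' hf'_int]
  ring

theorem hasDerivAt_sin_mul (H x : ℝ) : HasDerivAt (fun y => sin (H * y)) (H * cos (H * x)) x := by
  simpa [mul_comm] using ((hasDerivAt_id x).const_mul H).sin

theorem hasDerivAt_cos_mul (H x : ℝ) :
    HasDerivAt (fun y => cos (H * y)) (-(H * sin (H * x))) x := by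
  simpa [mul_comm] using ((hasDerivAt_id x).const_mul H).cos

section Sturm

variable {H R : ℝ} {l : ℝ → ℝ}

theorem tendsto_div_sin_mul_nhdsGT {a : ℝ} (hH : H ≠ 0) (hl : HasDerivAt l a 0) (hl0 : l 0 = 0) :
    Tendsto (fun x => l x / sin (H * x)) (𝓝[>] 0) (𝓝 (a / H)) := by
  have hnum := hl.tendsto_slope_zero_right
  have hden := (hasDerivAt_sin_mul H 0).tendsto_slope_zero_right
  simp only [zero_add, hl0, sub_zero, mul_zero, sin_zero, cos_zero, mul_one, smul_eq_mul]
    at hnum hden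
  refine (hnum.div hden hH).congr' ?_
  filter_upwards [self_mem_nhdsWithin] with t (ht : 0 < t)
  exact mul_div_mul_left _ _ (inv_ne_zero ht.ne')

theorem sin_mul_pos_of_mem_Ioc (hH : 0 < H) (hHR : H * R < π) {x : ℝ} (hx : x ∈ Ioc 0 R) :
    0 < sin (H * x) :=
  sin_pos_of_pos_of_lt_pi (mul_pos hH hx.1) ((mul_le_mul_of_nonneg_left hx.2 hH.le).trans_lt hHR)

variable (hH : 0 < H) (hl : ContDiff ℝ 2 l)
  (hl'' : ∀ r ∈ Icc 0 R, -H ^ 2 * l r ≤ deriv (deriv l) r)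
include hH hl hl''

theorem mul_cos_le_deriv_mul_sin (hHR : H * R ≤ π) (hl0 : l 0 = 0) {x : ℝ} (hx : x ∈ Icc 0 R) :
    H * l x * cos (H * x) ≤ deriv l x * sin (H * x) := by
  set W := fun x => deriv l x * sin (H * x) - H * l x * cos (H * x)
  have hW (x : ℝ) : HasDerivAt W ((deriv (deriv l) x + H ^ 2 * l x) * sin (H * x)) x :=
    (((hl.differentiable_deriv_two x).hasDerivAt.fun_mul (hasDerivAt_sin_mul H x)).sub
      (((hl.differentiable two_ne_zero x).hasDerivAt.const_mul H).fun_mul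
        (hasDerivAt_cos_mul H x))).congr_deriv (by ring)
  have hW_mono : MonotoneOn W (Icc 0 R) := by
    refine monotoneOn_of_deriv_nonneg (convex_Icc 0 R) (HasDerivAt.continuousOn fun x _ => hW x)
      (fun x _ => (hW x).differentiableAt.differentiableWithinAt) fun x hx => ?_
    rw [interior_Icc] at hx
    rw [(hW x).deriv]
    have hsin : 0 ≤ sin (H * x) := sin_nonneg_of_nonneg_of_le_pi (mul_nonneg hH.le hx.1.le)
      ((mul_le_mul_of_nonneg_left hx.2.le hH.le).trans hHR)
    exact mul_nonneg (by linarith [hl'' x (Ioo_subset_Icc_self hx)]) hsin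
  have := hW_mono ⟨le_rfl, hx.1.trans hx.2⟩ hx hx.1
  simp only [W, hl0, mul_zero, sin_zero, cos_zero] at this
  linarith

theorem monotoneOn_div_sin_mul (hHR : H * R < π) (hl0 : l 0 = 0) :
    MonotoneOn (fun x => l x / sin (H * x)) (Ioc 0 R) := by
  have hq {x : ℝ} (hx : x ∈ Ioc 0 R) : HasDerivAt (fun x => l x / sin (H * x))
      ((deriv l x * sin (H * x) - l x * (H * cos (H * x))) / sin (H * x) ^ 2) x :=
    (hl.differentiable two_ne_zero x).hasDerivAt.div (hasDerivAt_sin_mul H x)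
      (sin_mul_pos_of_mem_Ioc hH hHR hx).ne'
  refine monotoneOn_of_deriv_nonneg (convex_Ioc 0 R)
    (fun x hx => (hq hx).continuousAt.continuousWithinAt)
    (fun x hx => (hq (interior_subset hx)).differentiableAt.differentiableWithinAt) fun x hx => ?_
  rw [(hq (interior_subset hx)).deriv]
  have := mul_cos_le_deriv_mul_sin hH hl hl'' hHR.le hl0 (Ioc_subset_Icc_self (interior_subset hx))
  exact div_nonneg (by linarith) (sq_nonneg _)

theorem div_mul_sin_le_of_deriv_deriv_ge (hHR : H * R < π) (hl0 : l 0 = 0) :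
    ∀ r ∈ Icc 0 R, deriv l 0 / H * sin (H * r) ≤ l r := by
  intro r hr
  rcases hr.1.eq_or_lt with rfl | hr0
  · simp [hl0]
  have hsin := sin_mul_pos_of_mem_Ioc hH hHR ⟨hr0, hr.2⟩
  have hlim : deriv l 0 / H ≤ l r / sin (H * r) := by
    refine le_of_tendsto (tendsto_div_sin_mul_nhdsGT hH.ne'
      (hl.differentiable two_ne_zero 0).hasDerivAt hl0) ?_
    filter_upwards [Ioc_mem_nhdsGT hr0] with t ht
    exact monotoneOn_div_sin_mul hH hl hl'' hHR hl0 ⟨ht.1, ht.2.trans hr.2⟩ ⟨hr0, hr.2⟩ ht.2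
  rwa [le_div_iff₀ hsin] at hlim

end Sturm

noncomputable def stabilityWeight (H : ℝ) (η : ℝ → ℝ) (r : ℝ) : ℝ :=
  3 * deriv η r ^ 2 + 4 * η r * deriv (deriv η) r + 4 * H ^ 2 * η r ^ 2

theorem stability_form_eq {l η : ℝ → ℝ} (hl : ContDiff ℝ 2 l) (hη : ContDiff ℝ 2 η) (H R : ℝ)
    (hl0 : l 0 = 0) (hη0 : η 0 = 1) (hηR : η R = 0) :
    (∫ r in (0:ℝ)..R, deriv η r ^ 2 * l r) - 4 * H ^ 2 * (∫ r in (0:ℝ)..R, η r ^ 2 * l r)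
      - 2 * (∫ r in (0:ℝ)..R, deriv (deriv l) r * η r ^ 2)
      = 2 * deriv l 0 - ∫ r in (0:ℝ)..R, stabilityWeight H η r * l r := by
  have hd {f : ℝ → ℝ} (hf : ContDiff ℝ 2 f) (x : ℝ) : HasDerivAt f (deriv f x) x :=
    (hf.differentiable two_ne_zero x).hasDerivAt
  have hdd {f : ℝ → ℝ} (hf : ContDiff ℝ 2 f) (x : ℝ) :
      HasDerivAt (deriv f) (deriv (deriv f) x) x :=
    (hf.differentiable_deriv_two x).hasDerivAt
  have hη_sq (x : ℝ) : HasDerivAt (fun r => η r ^ 2) (2 * η x * deriv η x) x := by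
    simpa using (hd hη x).fun_pow 2
  have hη_sq' (x : ℝ) : HasDerivAt (fun r => 2 * η r * deriv η r)
      (2 * (deriv η x ^ 2 + η x * deriv (deriv η) x)) x :=
    (((hd hη x).const_mul 2).fun_mul (hdd hη x)).congr_deriv (by ring)
  have := hl.continuous
  have := hl.deriv'.continuous_deriv_one
  have := hη.continuous
  have := hη.continuous_deriv one_le_two
  have := hη.deriv'.continuous_deriv_one
  have green := integral_mul_deriv_deriv_eq_deriv_deriv_mul (fun x _ => hd hl x)
    (fun x _ => hdd hl x) (fun x _ => hη_sq x) (fun x _ => hη_sq' x)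
    (by apply Continuous.intervalIntegrable; fun_prop)
    (by apply Continuous.intervalIntegrable; fun_prop) (a := 0) (b := R)
  rw [hη0, hηR, hl0] at green
  have hweight : ∫ r in (0:ℝ)..R, stabilityWeight H η r * l r =
      ∫ r in (0:ℝ)..R, 2 * (2 * (deriv η r ^ 2 + η r * deriv (deriv η) r) * l r)
        - deriv η r ^ 2 * l r + 4 * H ^ 2 * (η r ^ 2 * l r) :=
    integral_congr fun r _ => by simp only [stabilityWeight]; ring
  rw [intervalIntegral.integral_add, intervalIntegral.integral_sub,
    intervalIntegral.integral_const_mul, intervalIntegral.integral_const_mul] at hweight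
  all_goals try (apply Continuous.intervalIntegrable; fun_prop)
  rw [integral_congr (g := fun r => η r ^ 2 * deriv (deriv l) r) fun r _ => mul_comm _ _,
    green, hweight]
  ring

noncomputable def cosTestFn (H c r : ℝ) : ℝ := (cos (H * r) - c) / (1 - c)

section CosTestFn

variable {H c : ℝ}

theorem hasDerivAt_cosTestFn (r : ℝ) :
    HasDerivAt (cosTestFn H c) (-(H * sin (H * r)) / (1 - c)) r :=
  ((hasDerivAt_cos_mul H r).sub_const c).div_const (1 - c)

theorem deriv_cosTestFn : deriv (cosTestFn H c) = fun r => -(H * sin (H * r)) / (1 - c) :=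
  funext fun r => (hasDerivAt_cosTestFn r).deriv

theorem deriv_deriv_cosTestFn :
    deriv (deriv (cosTestFn H c)) = fun r => -(H ^ 2 * cos (H * r)) / (1 - c) := by
  rw [deriv_cosTestFn]
  funext r
  exact ((((hasDerivAt_sin_mul H r).const_mul H).neg).div_const (1 - c)).deriv.trans (by ring)

theorem contDiff_cosTestFn : ContDiff ℝ 2 (cosTestFn H c) := by
  unfold cosTestFn
  fun_prop

theorem cosTestFn_zero (hc : c ≠ 1) : cosTestFn H c 0 = 1 := by
  simp [cosTestFn, div_self (sub_ne_zero.2 hc.symm)]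

theorem cosTestFn_cos_mul (R : ℝ) : cosTestFn H (cos (H * R)) R = 0 := by
  simp [cosTestFn]

theorem stabilityWeight_cosTestFn (hc : c ≠ 1) (r : ℝ) :
    stabilityWeight H (cosTestFn H c) r =
      H ^ 2 * (3 * sin (H * r) ^ 2 + 4 * c * (c - cos (H * r))) / (1 - c) ^ 2 := by
  have : 1 - c ≠ 0 := sub_ne_zero.2 hc.symm
  rw [stabilityWeight, deriv_deriv_cosTestFn, deriv_cosTestFn]
  simp only [cosTestFn]
  field_simp
  ring

theorem integral_stabilityWeight_cosTestFn_mul_sin (hH : H ≠ 0) (R a : ℝ)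
    (hc : cos (H * R) ≠ 1) :
    ∫ r in (0:ℝ)..R, stabilityWeight H (cosTestFn H (cos (H * R))) r * (a / H * sin (H * r))
      = a * (2 - cos (H * R)) := by
  set c := cos (H * R) with hc_def
  have hc' : 1 - c ≠ 0 := sub_ne_zero.2 hc.symm
  have hF (r : ℝ) : HasDerivAt (fun r => a / (1 - c) ^ 2 *
      (cos (H * r) ^ 3 + 2 * c * cos (H * r) ^ 2 - (3 + 4 * c ^ 2) * cos (H * r)))
      (stabilityWeight H (cosTestFn H c) r * (a / H * sin (H * r))) r := by
    have hk := hasDerivAt_cos_mul H r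
    refine ((((hk.fun_pow 3).add ((hk.fun_pow 2).const_mul (2 * c))).sub
      (hk.const_mul (3 + 4 * c ^ 2))).const_mul (a / (1 - c) ^ 2)).congr_deriv ?_
    rw [stabilityWeight_cosTestFn hc, sin_sq]
    field_simp
    ring
  rw [integral_eq_sub_of_hasDerivAt (fun r _ => hF r)]
  · simp only [← hc_def, mul_zero, cos_zero]
    field_simp
    ring
  · simp only [stabilityWeight_cosTestFn hc]
    exact Continuous.intervalIntegrable (by fun_prop) _ _

theorem stabilityWeight_cosTestFn_nonneg (hc : c ≤ 0) {r : ℝ} (hr : c ≤ cos (H * r)) :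
    0 ≤ stabilityWeight H (cosTestFn H c) r := by
  rw [stabilityWeight_cosTestFn (by linarith)]
  have := mul_nonneg_of_nonpos_of_nonpos hc (sub_nonpos.2 hr)
  exact div_nonneg (mul_nonneg (sq_nonneg H) (by nlinarith [sq_nonneg (sin (H * r))]))
    (sq_nonneg _)

theorem mul_two_sub_cos_le_integral_stabilityWeight_cosTestFn {R a : ℝ} {l : ℝ → ℝ} (hH : 0 < H)
    (hHR : π / 2 ≤ H * R) (hHRπ : H * R ≤ π) (hl : Continuous l)
    (hlow : ∀ r ∈ Icc 0 R, a / H * sin (H * r) ≤ l r) :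
    a * (2 - cos (H * R)) ≤
      ∫ r in (0:ℝ)..R, stabilityWeight H (cosTestFn H (cos (H * R))) r * l r := by
  have hc : cos (H * R) ≤ 0 := cos_nonpos_of_pi_div_two_le_of_le hHR (by linarith [pi_pos])
  have hR : 0 ≤ R := (pos_of_mul_pos_right (by linarith [pi_pos]) hH.le).le
  have hweight : Continuous (stabilityWeight H (cosTestFn H (cos (H * R)))) := by
    simp only [funext (stabilityWeight_cosTestFn (H := H) (by linarith : cos (H * R) ≠ 1))]
    fun_prop
  rw [← integral_stabilityWeight_cosTestFn_mul_sin hH.ne' R a (by linarith)]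
  refine integral_mono_on hR (Continuous.intervalIntegrable (by fun_prop) _ _)
    (Continuous.intervalIntegrable (by fun_prop) _ _) fun r hr => ?_
  refine mul_le_mul_of_nonneg_left (hlow r hr) (stabilityWeight_cosTestFn_nonneg hc ?_)
  exact cos_le_cos_of_nonneg_of_le_pi (mul_nonneg hH.le hr.1) hHRπ
    (mul_le_mul_of_nonneg_left hr.2 hH.le)

end CosTestFn

theorem distance_estimate_radial_general
    (H R₀ : ℝ) (hH : 0 < H)
    (l : ℝ → ℝ) (hl : ContDiff ℝ 2 l)
    (hl0 : l 0 = 0) (hl'0 : deriv l 0 = 2 * π)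
    (hl'' : ∀ r ∈ Set.Icc (0:ℝ) R₀, deriv (deriv l) r ≥ -H ^ 2 * l r)
    (hstab : ∀ R ∈ Set.Ioc (0:ℝ) R₀, ∀ η : ℝ → ℝ,
      ContDiff ℝ 2 η → η 0 = 1 → η R = 0 →
      (∫ r in (0:ℝ)..R, (deriv η r) ^ 2 * l r)
        - 4 * H ^ 2 * (∫ r in (0:ℝ)..R, (η r) ^ 2 * l r)
        - 2 * (∫ r in (0:ℝ)..R, deriv (deriv l) r * (η r) ^ 2) ≥ 0) :
    R₀ ≤ π / (2 * H) := by
  by_contra! hR₀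
  obtain ⟨R, hR, hRR₀, hHR, hHRπ⟩ : ∃ R, 0 < R ∧ R ≤ R₀ ∧ π / 2 < H * R ∧ H * R < π := by
    have hHR₀ : π / 2 < H * R₀ := by
      rw [div_lt_iff₀ (by positivity)] at hR₀
      linarith
    refine ⟨min R₀ (3 * π / (4 * H)), lt_min ((by positivity : 0 < π / (2 * H)).trans hR₀)
      (by positivity), min_le_left _ _, ?_⟩
    rw [mul_min_of_nonneg _ _ hH.le, show H * (3 * π / (4 * H)) = 3 * π / 4 by field_simp]
    exact ⟨lt_min hHR₀ (by linarith [pi_pos]), (min_le_right _ _).trans_lt (by linarith [pi_pos])⟩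
  have hc : cos (H * R) < 0 := cos_neg_of_pi_div_two_lt_of_lt hHR (by linarith [pi_pos])
  have hη0 : cosTestFn H (cos (H * R)) 0 = 1 := cosTestFn_zero (by linarith)
  have hstabR := hstab R ⟨hR, hRR₀⟩ _ contDiff_cosTestFn hη0 (cosTestFn_cos_mul R)
  rw [stability_form_eq hl contDiff_cosTestFn H R hl0 hη0 (cosTestFn_cos_mul R), hl'0] at hstabR
  have hlow := div_mul_sin_le_of_deriv_deriv_ge hH hl
    (fun r hr => hl'' r ⟨hr.1, hr.2.trans hRR₀⟩) hHRπ hl0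
  rw [hl'0] at hlow
  have hcomparison := mul_two_sub_cos_le_integral_stabilityWeight_cosTestFn hH hHR.le hHRπ.le
    hl.continuous hlow
  nlinarith [mul_neg_of_pos_of_neg pi_pos hc]

/-- Abstract radial form of the main theorem: if `l` is C² with `l 0 = 0`,
`l' 0 = 2π`, `l'' ≥ −H² l` on `[0, R₀]`, and the radial stability inequality
`∫ η'² l − 4H² ∫ η² l − 2 ∫ l'' η² ≥ 0` holds for every `R ∈ (0, R₀]` and every
C² test function `η` with `η 0 = 1`, `η R = 0`, then `R₀ ≤ π/(2H)`. -/
theorem distance_estimate_radial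
    (H R₀ : ℝ) (hH : 0 < H) (hR₀ : 0 < R₀)
    (l : ℝ → ℝ) (hl : ContDiff ℝ 2 l)
    (hl0 : l 0 = 0) (hl'0 : deriv l 0 = 2 * π)
    (hl'' : ∀ r ∈ Set.Icc (0:ℝ) R₀, deriv (deriv l) r ≥ -H ^ 2 * l r)
    (hstab : ∀ R ∈ Set.Ioc (0:ℝ) R₀, ∀ η : ℝ → ℝ,
      ContDiff ℝ 2 η → η 0 = 1 → η R = 0 →
      (∫ r in (0:ℝ)..R, (deriv η r) ^ 2 * l r)
        - 4 * H ^ 2 * (∫ r in (0:ℝ)..R, (η r) ^ 2 * l r)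
        - 2 * (∫ r in (0:ℝ)..R, deriv (deriv l) r * (η r) ^ 2) ≥ 0) :
    R₀ ≤ π / (2 * H) :=
  distance_estimate_radial_general H R₀ hH l hl hl0 hl'0 hl'' hstab
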